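/- arXiv:1609.07180 — 2 statements merged into one kernel-verified Lean document; each statement's English description precedes it below -/
import Mathlib

section
/- (Proposition 3) The constant N₁ satisfies N₁ ≥ 1, and the target density is bounded by the scaled proposal density: h(x) ≤ N₁ · g(x) for all x ∈ ℝ^n; moreover the bound is attained at x = 0 exactly when w(0) = 1, i.e. h(0) = N₁ g(0). -/
/-!
In the coordinates `u = V L x`, where `V` has rows `v j`, the precision `Γ_cond⁻¹` and its
low-rank approximation `Γ̂_cond⁻¹` are both diagonal, with entries `σ + μ λ_j` and
`σ + μ λ_j 1[j < k]`. Completing the square in the two Gaussian exponents gives the exact identity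
`h = N₁ · w · g`, where `N₁` collects the square root of the determinant ratio and the gap
`½ (yᵀ Γ̂_cond y - yᵀ Γ_cond y)` at `y = μ Aᵀ b`; both only see the discarded directions `j ≥ k`.
Since `Γ_cond⁻¹ - Γ̂_cond⁻¹` is positive semidefinite, `w ≤ 1` with equality at `0`, and `N₁ ≥ 1`
because the discarded eigenvalues are nonnegative.
-/

open Matrix Finset Real

noncomputable section

namespace Matrix

theorem transpose_mul_mul_mul_conj {ι : Type*} [Fintype ι] (P Q D : Matrix ι ι ℝ) :
    (P * Q)ᵀ * D * (P * Q) = Qᵀ * (Pᵀ * D * P) * Q := by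
  simp only [transpose_mul, Matrix.mul_assoc]

variable {ι : Type*} [Fintype ι] [DecidableEq ι]

theorem sum_smul_vecMulVec_self_eq (v : ι → ι → ℝ) (d : ι → ℝ) :
    ∑ j, d j • vecMulVec (v j) (v j) = (of v)ᵀ * diagonal d * of v := by
  ext p q
  simp [Matrix.sum_apply, vecMulVec_apply, mul_apply, diagonal_apply, mul_comm, mul_left_comm]

theorem transpose_of_mul_of_eq_one {v : ι → ι → ℝ}
    (hv : ∀ i j, v i ⬝ᵥ v j = if i = j then 1 else 0) : (of v)ᵀ * of v = 1 := by
  refine mul_eq_one_comm.mp (ext fun i j => ?_)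
  simpa [mul_apply, one_apply, dotProduct] using hv i j

theorem smul_one_add_smul_sum_vecMulVec_self {v : ι → ι → ℝ}
    (hv : ∀ i j, v i ⬝ᵥ v j = if i = j then 1 else 0) (a b : ℝ) (d : ι → ℝ) :
    a • 1 + b • ∑ j, d j • vecMulVec (v j) (v j)
      = (of v)ᵀ * diagonal (fun j => a + b * d j) * of v := by
  have hdiag : diagonal (fun j => a + b * d j) = a • 1 + b • diagonal d := by
    ext i j; by_cases h : i = j <;> simp [h]
  rw [sum_smul_vecMulVec_self_eq, hdiag, Matrix.mul_add, Matrix.add_mul, Matrix.mul_smul,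
    Matrix.mul_smul, Matrix.smul_mul, Matrix.smul_mul, Matrix.mul_one,
    transpose_of_mul_of_eq_one hv]

variable {κ : Type*} [Fintype κ]

theorem dotProduct_transpose_mul_diagonal_mul_mulVec (B : Matrix ι κ ℝ) (c : ι → ℝ)
    (x y : κ → ℝ) :
    x ⬝ᵥ ((Bᵀ * diagonal c * B) *ᵥ y) = ∑ j, c j * (B *ᵥ x) j * (B *ᵥ y) j := by
  rw [← mulVec_mulVec, ← mulVec_mulVec, dotProduct_mulVec, vecMul_transpose]
  simp only [dotProduct, mulVec_diagonal]
  exact Finset.sum_congr rfl fun j _ => by ring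

theorem inv_transpose_mul_diagonal_mul (B : Matrix ι ι ℝ) {c : ι → ℝ} (hc : ∀ j, c j ≠ 0) :
    (Bᵀ * diagonal c * B)⁻¹ = B⁻¹ * diagonal c⁻¹ * B⁻¹ᵀ := by
  have hdiag : (diagonal c)⁻¹ = diagonal c⁻¹ :=
    inv_eq_left_inv (by rw [diagonal_mul_diagonal, ← diagonal_one]; simp [hc])
  rw [Matrix.mul_inv_rev, Matrix.mul_inv_rev, hdiag, transpose_nonsing_inv, Matrix.mul_assoc]

theorem det_transpose_mul_diagonal_mul (B : Matrix ι ι ℝ) (c : ι → ℝ) :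
    (Bᵀ * diagonal c * B).det = B.det ^ 2 * ∏ j, c j := by
  rw [det_mul, det_mul, det_transpose, det_diagonal]; ring

theorem posDef_transpose_mul_diagonal_mul {B : Matrix ι ι ℝ} (hB : IsUnit B.det) {c : ι → ℝ}
    (hc : ∀ j, 0 < c j) : (Bᵀ * diagonal c * B).PosDef := by
  rw [← conjTranspose_eq_transpose_of_trivial]
  exact (PosDef.diagonal hc).conjTranspose_mul_mul_same
    (mulVec_injective_iff_isUnit.mpr ((isUnit_iff_isUnit_det B).mpr hB))

theorem dotProduct_inv_transpose_mul_diagonal_mul_mulVec (B : Matrix ι ι ℝ) {c : ι → ℝ}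
    (hc : ∀ j, c j ≠ 0) (y : ι → ℝ) :
    y ⬝ᵥ ((Bᵀ * diagonal c * B)⁻¹ *ᵥ y) = ∑ j, (c j)⁻¹ * (B⁻¹ᵀ *ᵥ y) j ^ 2 := by
  rw [inv_transpose_mul_diagonal_mul B hc, ← transpose_transpose B⁻¹, transpose_transpose B⁻¹ᵀ,
    dotProduct_transpose_mul_diagonal_mul_mulVec]
  exact Finset.sum_congr rfl fun j _ => by simp only [Pi.inv_apply]; ring

theorem det_inv_transpose_mul_diagonal_mul_div {B : Matrix ι ι ℝ} (hB : B.det ≠ 0)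
    (c c' : ι → ℝ) :
    (Bᵀ * diagonal c' * B)⁻¹.det / (Bᵀ * diagonal c * B)⁻¹.det = ∏ j, c j / c' j := by
  rw [det_nonsing_inv, det_nonsing_inv, Ring.inverse_eq_inv', inv_div_inv,
    det_transpose_mul_diagonal_mul, det_transpose_mul_diagonal_mul,
    mul_div_mul_left _ _ (pow_ne_zero 2 hB), prod_div_distrib]

theorem dotProduct_transpose_mul_diagonal_mul_mulVec_mono (B : Matrix ι κ ℝ) {c c' : ι → ℝ}
    (h : ∀ j, c' j ≤ c j) (x : κ → ℝ) :
    x ⬝ᵥ ((Bᵀ * diagonal c' * B) *ᵥ x) ≤ x ⬝ᵥ ((Bᵀ * diagonal c * B) *ᵥ x) := by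
  rw [dotProduct_transpose_mul_diagonal_mul_mulVec, dotProduct_transpose_mul_diagonal_mul_mulVec]
  exact sum_le_sum fun j _ => by nlinarith [h j, mul_self_nonneg ((B *ᵥ x) j)]

end Matrix

def gaussianDensity {n : ℕ} (Γ : Matrix (Fin n) (Fin n) ℝ) (m x : Fin n → ℝ) : ℝ :=
  (2 * π) ^ (-(n : ℝ) / 2) * Γ.det ^ (-(1 : ℝ) / 2) *
    exp (-(1 / 2) * ((x - m) ⬝ᵥ (Γ⁻¹ *ᵥ (x - m))))

namespace Matrix.PosDef

variable {ι : Type*} [Fintype ι] [DecidableEq ι] {Γ : Matrix ι ι ℝ}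

theorem dotProduct_inv_mulVec_sub_mulVec (hΓ : Γ.PosDef) (x y : ι → ℝ) :
    (x - Γ *ᵥ y) ⬝ᵥ (Γ⁻¹ *ᵥ (x - Γ *ᵥ y))
      = x ⬝ᵥ (Γ⁻¹ *ᵥ x) - 2 * (x ⬝ᵥ y) + y ⬝ᵥ (Γ *ᵥ y) := by
  have hinv : Γ⁻¹ *ᵥ (Γ *ᵥ y) = y := by
    rw [mulVec_mulVec, nonsing_inv_mul _ ((isUnit_iff_isUnit_det Γ).mp hΓ.isUnit), one_mulVec]
  have hsymm : Γ⁻¹ᵀ = Γ⁻¹ := by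
    rw [← conjTranspose_eq_transpose_of_trivial]; exact hΓ.isHermitian.inv
  have hcross : (Γ *ᵥ y) ⬝ᵥ (Γ⁻¹ *ᵥ x) = x ⬝ᵥ y := by
    rw [dotProduct_mulVec, ← mulVec_transpose, hsymm, hinv, dotProduct_comm]
  rw [mulVec_sub, hinv, sub_dotProduct, dotProduct_sub, dotProduct_sub, hcross,
    dotProduct_comm (Γ *ᵥ y) y]
  ring

end Matrix.PosDef

theorem gaussianDensity_eq_mul {n : ℕ} {Γ₁ Γ₂ : Matrix (Fin n) (Fin n) ℝ} (h₁ : Γ₁.PosDef)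
    (h₂ : Γ₂.PosDef) (y x : Fin n → ℝ) :
    gaussianDensity Γ₁ (Γ₁ *ᵥ y) x
      = √(Γ₂.det / Γ₁.det) * exp ((1 / 2) * (y ⬝ᵥ (Γ₂ *ᵥ y) - y ⬝ᵥ (Γ₁ *ᵥ y))) *
        exp (-(1 / 2) * (x ⬝ᵥ ((Γ₁⁻¹ - Γ₂⁻¹) *ᵥ x))) * gaussianDensity Γ₂ (Γ₂ *ᵥ y) x := by
  have hdet : Γ₁.det ^ (-(1 : ℝ) / 2) = √(Γ₂.det / Γ₁.det) * Γ₂.det ^ (-(1 : ℝ) / 2) := by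
    rw [sqrt_eq_rpow, div_rpow h₂.det_pos.le h₁.det_pos.le, neg_div, rpow_neg h₁.det_pos.le,
      rpow_neg h₂.det_pos.le]
    rw [div_mul_eq_mul_div, mul_inv_cancel₀ (rpow_pos_of_pos h₂.det_pos _).ne']
    exact (one_div _).symm
  simp only [gaussianDensity, h₁.dotProduct_inv_mulVec_sub_mulVec,
    h₂.dotProduct_inv_mulVec_sub_mulVec, sub_mulVec, dotProduct_sub]
  set q₁ := x ⬝ᵥ (Γ₁⁻¹ *ᵥ x)
  set q₂ := x ⬝ᵥ (Γ₂⁻¹ *ᵥ x)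
  set r₁ := y ⬝ᵥ (Γ₁ *ᵥ y)
  set r₂ := y ⬝ᵥ (Γ₂ *ᵥ y)
  rw [hdet, show -(1 / 2) * (q₁ - 2 * (x ⬝ᵥ y) + r₁)
      = (1 / 2) * (r₂ - r₁) + -(1 / 2) * (q₁ - q₂) + -(1 / 2) * (q₂ - 2 * (x ⬝ᵥ y) + r₂) by ring,
    exp_add, exp_add]
  ring

theorem gaussianDensity_pos {n : ℕ} {Γ : Matrix (Fin n) (Fin n) ℝ} (hΓ : Γ.PosDef)
    (m x : Fin n → ℝ) : 0 < gaussianDensity Γ m x := by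
  unfold gaussianDensity
  have := rpow_pos_of_pos hΓ.det_pos (-(1 : ℝ) / 2)
  positivity

theorem one_le_exp_mul_prod_sqrt_one_add {ι : Type*} {s : Finset ι} {a : ι → ℝ} {E : ℝ}
    (hE : 0 ≤ E) (ha : ∀ j ∈ s, 0 ≤ a j) : 1 ≤ exp E * ∏ j ∈ s, √(1 + a j) :=
  one_le_mul_of_one_le_of_one_le (one_le_exp hE)
    (one_le_prod fun j hj => one_le_sqrt.mpr (by linarith [ha j hj]))

section PriorPreconditioned

variable {m n : ℕ} {A : Matrix (Fin m) (Fin n) ℝ} {L : Matrix (Fin n) (Fin n) ℝ}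
  {v : Fin n → Fin n → ℝ} {lam : Fin n → ℝ}

/-- Indices are `0`-based, so `j < k` keeps the `k` largest eigenvalues `λ_1, …, λ_k`. -/
def truncate (k : ℕ) (lam : Fin n → ℝ) (j : Fin n) : ℝ := if (j : ℕ) < k then lam j else 0

theorem posterior_precision_eq (hL : IsUnit L.det)
    (hv : ∀ i j, v i ⬝ᵥ v j = if i = j then 1 else 0)
    (hH : (L⁻¹)ᵀ * Aᵀ * A * L⁻¹ = ∑ j, lam j • vecMulVec (v j) (v j)) (μ σ : ℝ) :
    μ • (Aᵀ * A) + σ • (Lᵀ * L)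
      = (of v * L)ᵀ * diagonal (fun j => σ + μ * lam j) * (of v * L) := by
  have hAA : Aᵀ * A = Lᵀ * (∑ j, lam j • vecMulVec (v j) (v j)) * L := by
    rw [← hH]
    simp only [← Matrix.mul_assoc]
    rw [← transpose_mul, nonsing_inv_mul _ hL, transpose_one, Matrix.one_mul,
      Matrix.mul_assoc, nonsing_inv_mul _ hL, Matrix.mul_one]
  rw [transpose_mul_mul_mul_conj, ← smul_one_add_smul_sum_vecMulVec_self hv, hAA]
  simp only [Matrix.mul_add, Matrix.add_mul, Matrix.mul_smul, Matrix.smul_mul, Matrix.mul_one,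
    add_comm]

theorem lowRank_covariance_eq (hv : ∀ i j, v i ⬝ᵥ v j = if i = j then 1 else 0)
    (μ σ : ℝ) (k : ℕ) :
    L⁻¹ * (σ • (1 : Matrix (Fin n) (Fin n) ℝ) +
        μ • ∑ j ∈ univ.filter (fun j : Fin n => (j : ℕ) < k), lam j • vecMulVec (v j) (v j))⁻¹ *
        (L⁻¹)ᵀ
      = ((of v * L)ᵀ * diagonal (fun j => σ + μ * truncate k lam j) * (of v * L))⁻¹ := by
  have hsum : ∑ j ∈ univ.filter (fun j : Fin n => (j : ℕ) < k), lam j • vecMulVec (v j) (v j)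
      = ∑ j, truncate k lam j • vecMulVec (v j) (v j) := by
    rw [Finset.sum_filter]
    exact Finset.sum_congr rfl fun j _ => by unfold truncate; split_ifs <;> simp
  rw [hsum, smul_one_add_smul_sum_vecMulVec_self hv, transpose_mul_mul_mul_conj,
    Matrix.mul_inv_rev (Lᵀ * _), Matrix.mul_inv_rev Lᵀ, transpose_nonsing_inv, Matrix.mul_assoc]

theorem transpose_inv_of_mul_mulVec_transpose_mulVec
    (hv : ∀ i j, v i ⬝ᵥ v j = if i = j then 1 else 0) (b : Fin m → ℝ) :
    ((of v * L)⁻¹)ᵀ *ᵥ (Aᵀ *ᵥ b) = fun j => b ⬝ᵥ (A *ᵥ (L⁻¹ *ᵥ v j)) := by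
  have hV : (of v)⁻¹ = (of v)ᵀ := inv_eq_left_inv (transpose_of_mul_of_eq_one hv)
  rw [Matrix.mul_inv_rev, hV, transpose_mul, transpose_transpose, ← mulVec_mulVec]
  ext j
  change v j ⬝ᵥ (L⁻¹ᵀ *ᵥ (Aᵀ *ᵥ b)) = _
  rw [dotProduct_mulVec, vecMul_transpose, dotProduct_mulVec, vecMul_transpose, dotProduct_comm]

theorem truncate_le (hlam : ∀ j, 0 ≤ lam j) (k : ℕ) (j : Fin n) : truncate k lam j ≤ lam j := by
  unfold truncate; split_ifs
  exacts [le_rfl, hlam j]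

theorem truncate_nonneg (hlam : ∀ j, 0 ≤ lam j) (k : ℕ) (j : Fin n) : 0 ≤ truncate k lam j := by
  unfold truncate; split_ifs
  exacts [hlam j, le_rfl]

theorem prod_div_truncate {μ σ : ℝ} (hσ : σ ≠ 0) (hc : ∀ j, σ + μ * lam j ≠ 0) (k : ℕ) :
    ∏ j, (σ + μ * lam j) / (σ + μ * truncate k lam j)
      = ∏ j ∈ univ.filter (fun j : Fin n => k ≤ (j : ℕ)), (1 + μ * lam j / σ) := by
  rw [prod_filter]
  refine prod_congr rfl fun j _ => ?_
  unfold truncate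
  split_ifs with hlt hle hle
  · omega
  · exact div_self (hc j)
  · rw [mul_zero, add_zero]
    field_simp
  · omega

theorem sum_inv_sub_inv_truncate {μ σ : ℝ} (hσ : σ ≠ 0) (hc : ∀ j, σ + μ * lam j ≠ 0) (k : ℕ)
    (z : Fin n → ℝ) :
    ∑ j, ((σ + μ * truncate k lam j)⁻¹ - (σ + μ * lam j)⁻¹) * z j ^ 2
      = σ⁻¹ * ∑ j ∈ univ.filter (fun j : Fin n => k ≤ (j : ℕ)),
          (μ * lam j / (μ * lam j + σ)) * z j ^ 2 := by
  rw [sum_filter, mul_sum]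
  refine sum_congr rfl fun j _ => ?_
  unfold truncate
  split_ifs with hlt hle hle
  · omega
  · ring
  · rw [mul_zero, add_zero, add_comm (μ * lam j)]
    field_simp [hc j]
    ring
  · omega

theorem sqrt_det_div_det_lowRank {B : Matrix (Fin n) (Fin n) ℝ} (hB : B.det ≠ 0) {μ σ : ℝ}
    (hσ : 0 < σ) (hμ : 0 ≤ μ) (hlam : ∀ j, 0 ≤ lam j) (k : ℕ) :
    √((Bᵀ * diagonal (fun j => σ + μ * truncate k lam j) * B)⁻¹.det /
        (Bᵀ * diagonal (fun j => σ + μ * lam j) * B)⁻¹.det)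
      = ∏ j ∈ univ.filter (fun j : Fin n => k ≤ (j : ℕ)), √(1 + μ * lam j / σ) := by
  rw [det_inv_transpose_mul_diagonal_mul_div hB,
    prod_div_truncate hσ.ne' (fun j => by nlinarith [hlam j]), sqrt_prod]
  exact fun j _ => by have := div_nonneg (mul_nonneg hμ (hlam j)) hσ.le; linarith

theorem half_dotProduct_inv_lowRank_sub {B : Matrix (Fin n) (Fin n) ℝ} {μ σ : ℝ}
    (hσ : 0 < σ) (hμ : 0 ≤ μ) (hlam : ∀ j, 0 ≤ lam j) (k : ℕ) (y : Fin n → ℝ) :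
    (1 / 2) * ((μ • y) ⬝ᵥ ((Bᵀ * diagonal (fun j => σ + μ * truncate k lam j) * B)⁻¹ *ᵥ μ • y) -
        (μ • y) ⬝ᵥ ((Bᵀ * diagonal (fun j => σ + μ * lam j) * B)⁻¹ *ᵥ μ • y))
      = (μ ^ 2 / (2 * σ)) * ∑ j ∈ univ.filter (fun j : Fin n => k ≤ (j : ℕ)),
          (μ * lam j / (μ * lam j + σ)) * (B⁻¹ᵀ *ᵥ y) j ^ 2 := by
  have hc : ∀ j, 0 < σ + μ * lam j := fun j => by nlinarith [hlam j]
  have hĉ : ∀ j, 0 < σ + μ * truncate k lam j := fun j => by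
    nlinarith [truncate_nonneg hlam k j]
  rw [dotProduct_inv_transpose_mul_diagonal_mul_mulVec B (fun j => (hĉ j).ne'),
    dotProduct_inv_transpose_mul_diagonal_mul_mulVec B (fun j => (hc j).ne'), ← sum_sub_distrib]
  simp only [mulVec_smul, Pi.smul_apply, smul_eq_mul, mul_pow, mul_left_comm _ (μ ^ 2), ← mul_sub,
    ← mul_sum, ← sub_mul, sum_inv_sub_inv_truncate hσ.ne' (fun j => (hc j).ne')]
  field_simp

end PriorPreconditioned

theorem stmt17_general
    (m n : ℕ)
    (A : Matrix (Fin m) (Fin n) ℝ) (L : Matrix (Fin n) (Fin n) ℝ) (hL : IsUnit L.det)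
    (μ σ : ℝ) (hμ : 0 < μ) (hσ : 0 < σ)
    (b : Fin m → ℝ)
    (v : Fin n → Fin n → ℝ) (lam : Fin n → ℝ)
    (horth : ∀ i j, v i ⬝ᵥ v j = if i = j then (1 : ℝ) else 0)
    (hlam_nonneg : ∀ j, 0 ≤ lam j)
    (hHdecomp : (L⁻¹)ᵀ * Aᵀ * A * L⁻¹ = ∑ j, lam j • vecMulVec (v j) (v j))
    (k : ℕ)
    (Γcond : Matrix (Fin n) (Fin n) ℝ)
    (hΓcond : Γcond = (μ • (Aᵀ * A) + σ • (Lᵀ * L))⁻¹)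
    (Γhat : Matrix (Fin n) (Fin n) ℝ)
    (hΓhat : Γhat = L⁻¹ * (σ • (1 : Matrix (Fin n) (Fin n) ℝ) +
        μ • ∑ j ∈ Finset.univ.filter (fun j : Fin n => (j : ℕ) < k),
          lam j • vecMulVec (v j) (v j))⁻¹ * (L⁻¹)ᵀ)
    (xcond : Fin n → ℝ) (hxcond : xcond = μ • (Γcond *ᵥ (Aᵀ *ᵥ b)))
    (xhat : Fin n → ℝ) (hxhat : xhat = μ • (Γhat *ᵥ (Aᵀ *ᵥ b)))
    (w : (Fin n → ℝ) → ℝ)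
    (hw : ∀ x, w x = Real.exp (-(1/2) * (x ⬝ᵥ ((Γcond⁻¹ - Γhat⁻¹) *ᵥ x))))
    (hfun : (Fin n → ℝ) → ℝ)
    (hhfun : ∀ x, hfun x = (2 * Real.pi) ^ (-(n : ℝ) / 2) * Γcond.det ^ (-(1 : ℝ) / 2) *
        Real.exp (-(1/2) * ((x - xcond) ⬝ᵥ (Γcond⁻¹ *ᵥ (x - xcond)))))
    (gfun : (Fin n → ℝ) → ℝ)
    (hgfun : ∀ x, gfun x = (2 * Real.pi) ^ (-(n : ℝ) / 2) * Γhat.det ^ (-(1 : ℝ) / 2) *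
        Real.exp (-(1/2) * ((x - xhat) ⬝ᵥ (Γhat⁻¹ *ᵥ (x - xhat)))))
    (N₁ : ℝ)
    (hN₁ : N₁ = Real.exp ((μ ^ 2 / (2 * σ)) *
        ∑ j ∈ Finset.univ.filter (fun j : Fin n => k ≤ (j : ℕ)),
          ((μ * lam j) / (μ * lam j + σ)) * (b ⬝ᵥ (A *ᵥ (L⁻¹ *ᵥ v j))) ^ 2) *
      ∏ j ∈ Finset.univ.filter (fun j : Fin n => k ≤ (j : ℕ)),
        Real.sqrt (1 + μ * lam j / σ))
    :
    1 ≤ N₁ ∧ (∀ x : Fin n → ℝ, hfun x ≤ N₁ * gfun x) ∧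
    w 0 = 1 ∧ hfun 0 = N₁ * gfun 0 := by
  set B := of v * L
  set c : Fin n → ℝ := fun j => σ + μ * lam j
  set ĉ : Fin n → ℝ := fun j => σ + μ * truncate k lam j
  have hB : IsUnit B.det := by
    rw [det_mul]; exact (isUnit_det_of_left_inverse (transpose_of_mul_of_eq_one horth)).mul hL
  have hP := posDef_transpose_mul_diagonal_mul hB (c := c) fun j => by nlinarith [hlam_nonneg j]
  have hQ := posDef_transpose_mul_diagonal_mul hB (c := ĉ) fun j => by
    nlinarith [truncate_nonneg hlam_nonneg k j]
  have hh : ∀ x, hfun x = gaussianDensity Γcond (Γcond *ᵥ (μ • (Aᵀ *ᵥ b))) x := fun x => by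
    rw [hhfun, hxcond, mulVec_smul]; rfl
  have hg : ∀ x, gfun x = gaussianDensity Γhat (Γhat *ᵥ (μ • (Aᵀ *ᵥ b))) x := fun x => by
    rw [hgfun, hxhat, mulVec_smul]; rfl
  rw [posterior_precision_eq hL horth hHdecomp] at hΓcond
  rw [lowRank_covariance_eq horth] at hΓhat
  subst hΓcond hΓhat
  have hkey : ∀ x, hfun x = N₁ * w x * gfun x := fun x => by
    rw [hh, hg, hw, gaussianDensity_eq_mul hP.inv hQ.inv,
      sqrt_det_div_det_lowRank hB.ne_zero hσ hμ.le hlam_nonneg,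
      half_dotProduct_inv_lowRank_sub hσ hμ.le hlam_nonneg,
      transpose_inv_of_mul_mulVec_transpose_mulVec horth, hN₁]
    ring
  have hw_le : ∀ x, w x ≤ 1 := fun x => by
    rw [hw, exp_le_one_iff, nonsing_inv_nonsing_inv _ ((isUnit_iff_isUnit_det _).mp hP.isUnit),
      nonsing_inv_nonsing_inv _ ((isUnit_iff_isUnit_det _).mp hQ.isUnit), sub_mulVec,
      dotProduct_sub]
    linarith [dotProduct_transpose_mul_diagonal_mul_mulVec_mono B (c := c) (c' := ĉ)
      (fun j => by nlinarith [truncate_le hlam_nonneg k j]) x]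
  have hw0 : w 0 = 1 := by simp [hw]
  have hN₁_ge : 1 ≤ N₁ := by
    rw [hN₁]
    refine one_le_exp_mul_prod_sqrt_one_add (mul_nonneg (by positivity) (sum_nonneg fun j _ => ?_))
      fun j _ => ?_ <;>
    · have := hlam_nonneg j
      positivity
  refine ⟨hN₁_ge, fun x => ?_, hw0, by rw [hkey, hw0, mul_one]⟩
  rw [hkey, hg]
  exact mul_le_mul_of_nonneg_right (mul_le_of_le_one_right (by linarith) (hw_le x))
    (gaussianDensity_pos hQ.inv _ _).le

theorem stmt17
    (m n : ℕ) (hm : 0 < m) (hn : 0 < n)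
    (A : Matrix (Fin m) (Fin n) ℝ) (L : Matrix (Fin n) (Fin n) ℝ) (hL : IsUnit L.det)
    (μ σ : ℝ) (hμ : 0 < μ) (hσ : 0 < σ)
    (b : Fin m → ℝ)
    (v : Fin n → Fin n → ℝ) (lam : Fin n → ℝ)
    (horth : ∀ i j, v i ⬝ᵥ v j = if i = j then (1 : ℝ) else 0)
    (hlam_nonneg : ∀ j, 0 ≤ lam j) (hlam_anti : Antitone lam)
    (hHdecomp : (L⁻¹)ᵀ * Aᵀ * A * L⁻¹ = ∑ j, lam j • vecMulVec (v j) (v j))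
    (k : ℕ) (hk : k ≤ n)
    (Γcond : Matrix (Fin n) (Fin n) ℝ)
    (hΓcond : Γcond = (μ • (Aᵀ * A) + σ • (Lᵀ * L))⁻¹)
    (Γhat : Matrix (Fin n) (Fin n) ℝ)
    (hΓhat : Γhat = L⁻¹ * (σ • (1 : Matrix (Fin n) (Fin n) ℝ) +
        μ • ∑ j ∈ Finset.univ.filter (fun j : Fin n => (j : ℕ) < k),
          lam j • vecMulVec (v j) (v j))⁻¹ * (L⁻¹)ᵀ)
    (xcond : Fin n → ℝ) (hxcond : xcond = μ • (Γcond *ᵥ (Aᵀ *ᵥ b)))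
    (xhat : Fin n → ℝ) (hxhat : xhat = μ • (Γhat *ᵥ (Aᵀ *ᵥ b)))
    (w : (Fin n → ℝ) → ℝ)
    (hw : ∀ x, w x = Real.exp (-(1/2) * (x ⬝ᵥ ((Γcond⁻¹ - Γhat⁻¹) *ᵥ x))))
    (hfun : (Fin n → ℝ) → ℝ)
    (hhfun : ∀ x, hfun x = (2 * Real.pi) ^ (-(n : ℝ) / 2) * Γcond.det ^ (-(1 : ℝ) / 2) *
        Real.exp (-(1/2) * ((x - xcond) ⬝ᵥ (Γcond⁻¹ *ᵥ (x - xcond)))))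
    (gfun : (Fin n → ℝ) → ℝ)
    (hgfun : ∀ x, gfun x = (2 * Real.pi) ^ (-(n : ℝ) / 2) * Γhat.det ^ (-(1 : ℝ) / 2) *
        Real.exp (-(1/2) * ((x - xhat) ⬝ᵥ (Γhat⁻¹ *ᵥ (x - xhat)))))
    (N₁ : ℝ)
    (hN₁ : N₁ = Real.exp ((μ ^ 2 / (2 * σ)) *
        ∑ j ∈ Finset.univ.filter (fun j : Fin n => k ≤ (j : ℕ)),
          ((μ * lam j) / (μ * lam j + σ)) * (b ⬝ᵥ (A *ᵥ (L⁻¹ *ᵥ v j))) ^ 2) *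
      ∏ j ∈ Finset.univ.filter (fun j : Fin n => k ≤ (j : ℕ)),
        Real.sqrt (1 + μ * lam j / σ))
    :
    1 ≤ N₁ ∧ (∀ x : Fin n → ℝ, hfun x ≤ N₁ * gfun x) ∧
    w 0 = 1 ∧ hfun 0 = N₁ * gfun 0 :=
  stmt17_general m n A L hL μ σ hμ hσ b v lam horth hlam_nonneg hHdecomp k Γcond hΓcond Γhat hΓhat
    xcond hxcond xhat hxhat w hw hfun hhfun gfun hgfun N₁ hN₁
end
end

section
/- If H ∈ ℝ^{n×n} is a symmetric matrix and P ∈ ℝ^{n×n} is an orthogonal projection matrix (P² = P and Pᵀ = P), then the spectral norm of the error of the symmetric low-rank compression Ĥ := P H P satisfies ‖H − P H P‖₂ ≤ 2‖H − P H‖₂. -/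
open Matrix MeasureTheory ProbabilityTheory Finset

noncomputable section

theorem stmt18 (n : ℕ) (H P : Matrix (Fin n) (Fin n) ℝ)
    (hH : Hᵀ = H) (hPidem : P * P = P) (hPsymm : Pᵀ = P) :
    ‖Matrix.toEuclideanCLM (𝕜 := ℝ) (H - P * H * P)‖ ≤
      2 * ‖Matrix.toEuclideanCLM (𝕜 := ℝ) (H - P * H)‖ := by
  set f := Matrix.toEuclideanCLM (𝕜 := ℝ) (n := Fin n) with hf
  have htrans : (H - P * H)ᵀ = H - H * P := by
    simp [Matrix.transpose_sub, Matrix.transpose_mul, hH, hPsymm]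
  have hdecomp : H - P * H * P = (H - P * H) + P * (H - P * H)ᵀ := by
    rw [htrans]
    noncomm_ring
  have hstarP : star P = P := by
    rw [Matrix.star_eq_conjTranspose, Matrix.conjTranspose_eq_transpose_of_trivial, hPsymm]
  have hstarM : star (H - P * H) = (H - P * H)ᵀ := by
    rw [Matrix.star_eq_conjTranspose, Matrix.conjTranspose_eq_transpose_of_trivial]
  have hstarfP : star (f P) = f P := by
    rw [← map_star, hstarP]
  have hadj : ∀ M : Matrix (Fin n) (Fin n) ℝ,
      ContinuousLinearMap.adjoint (f M) = f (star M) := by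
    intro M
    rw [map_star]
    exact (ContinuousLinearMap.star_eq_adjoint (f M)).symm
  have hnormstar : ∀ M : Matrix (Fin n) (Fin n) ℝ, ‖f (star M)‖ = ‖f M‖ := by
    intro M
    rw [← hadj]
    exact LinearIsometryEquiv.norm_map ContinuousLinearMap.adjoint (f M)
  have hnormP : ‖f P‖ ≤ 1 := by
    have hsq : ‖f P‖ * ‖f P‖ = ‖f P‖ := by
      calc ‖f P‖ * ‖f P‖ = ‖ContinuousLinearMap.adjoint (f P) ∘L f P‖ :=
            (ContinuousLinearMap.norm_adjoint_comp_self (f P)).symm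
        _ = ‖f P * f P‖ := by
            rw [hadj, hstarP]; rfl
        _ = ‖f (P * P)‖ := by rw [_root_.map_mul]
        _ = ‖f P‖ := by rw [hPidem]
    nlinarith [norm_nonneg (f P)]
  have hstarnorm : ‖f ((H - P * H)ᵀ)‖ = ‖f (H - P * H)‖ := by
    rw [← hstarM]
    exact hnormstar _
  calc ‖f (H - P * H * P)‖ = ‖f (H - P * H) + f P * f ((H - P * H)ᵀ)‖ := by
        rw [hdecomp, map_add, _root_.map_mul]
      _ ≤ ‖f (H - P * H)‖ + ‖f P * f ((H - P * H)ᵀ)‖ := norm_add_le _ _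
      _ ≤ ‖f (H - P * H)‖ + ‖f P‖ * ‖f ((H - P * H)ᵀ)‖ := by
        gcongr
        exact norm_mul_le _ _
      _ ≤ ‖f (H - P * H)‖ + 1 * ‖f (H - P * H)‖ := by
        rw [hstarnorm]
        gcongr
      _ = 2 * ‖f (H - P * H)‖ := by ring
end
end
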